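/- arXiv:2007.12373 — 3 statements merged into one kernel-verified Lean document; each statement's English description precedes it below -/
import Mathlib

section
/- Let τ be an infinite cardinal and let {X_α : α < τ} be a family of subcompact Hausdorff spaces, each with more than one point. Then the product X = ∏{X_α : α < τ} is strictly a_τ-subcompact. -/
open Cardinal Topology

universe u

/-- A Hausdorff space is *subcompact* if it admits a condensation (continuous bijection)
onto a compact Hausdorff space. -/
def Subcompact (X : Type u) [TopologicalSpace X] : Prop :=
  ∃ (Y : Type u) (_ : TopologicalSpace Y), CompactSpace Y ∧ T2Space Y ∧
    ∃ f : X → Y, Continuous f ∧ Function.Bijective f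

/-- A compact Hausdorff space `X` is an `a_τ`-space if for every `C ⊆ X` with `#C ≤ τ`
there is a condensation from the subspace `X \ C` onto a compact Hausdorff space. -/
def ATauSpace (τ : Cardinal.{u}) (X : Type u) [TopologicalSpace X] : Prop :=
  CompactSpace X ∧ T2Space X ∧ ∀ C : Set X, #C ≤ τ → Subcompact ↥(Cᶜ)

/-- A compact Hausdorff space `X` is a strictly `a_τ`-space if for every `C ⊆ X` with
`#C ≤ τ` there is a condensation from `X \ C` onto a compact Hausdorff space `K`
extending to a continuous map `X → K` (encoded: a continuous `g : X → K` whose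
restriction to `X \ C` is bijective). -/
def StrictATauSpace (τ : Cardinal.{u}) (X : Type u) [TopologicalSpace X] : Prop :=
  CompactSpace X ∧ T2Space X ∧ ∀ C : Set X, #C ≤ τ →
    ∃ (K : Type u) (_ : TopologicalSpace K), CompactSpace K ∧ T2Space K ∧
      ∃ g : X → K, Continuous g ∧ Function.Bijective fun x : ↥(Cᶜ) => g x

/-- A Hausdorff space `X` is `a_τ`-subcompact if for every `C ⊆ X` with `#C ≤ τ` there
is a condensation from `X \ C` onto an `a_τ`-space. -/
def ATauSubcompact (τ : Cardinal.{u}) (X : Type u) [TopologicalSpace X] : Prop :=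
  ∀ C : Set X, #C ≤ τ →
    ∃ (Y : Type u) (_ : TopologicalSpace Y), ATauSpace τ Y ∧
      ∃ f : ↥(Cᶜ) → Y, Continuous f ∧ Function.Bijective f

/-- A Hausdorff space `X` is strictly `a_τ`-subcompact if for every `C ⊆ X` with `#C ≤ τ`
there is a condensation from `X \ C` onto a strictly `a_τ`-space `Y` extending to a
continuous map `X → Y`. -/
def StrictATauSubcompact (τ : Cardinal.{u}) (X : Type u) [TopologicalSpace X] : Prop :=
  ∀ C : Set X, #C ≤ τ →
    ∃ (Y : Type u) (_ : TopologicalSpace Y), StrictATauSpace τ Y ∧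
      ∃ g : X → Y, Continuous g ∧ Function.Bijective fun x : ↥(Cᶜ) => g x

/-- A Hausdorff space `X` is almost strictly `a_τ`-subcompact if for every `C ⊆ X` with
`#C ≤ τ` there is a condensation from `X \ C` onto a compact Hausdorff space `Y`
extending to a continuous map `X → Y`. -/
def AlmostStrictATauSubcompact (τ : Cardinal.{u}) (X : Type u) [TopologicalSpace X] : Prop :=
  ∀ C : Set X, #C ≤ τ →
    ∃ (Y : Type u) (_ : TopologicalSpace Y), CompactSpace Y ∧ T2Space Y ∧
      ∃ g : X → Y, Continuous g ∧ Function.Bijective fun x : ↥(Cᶜ) => g x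

/-! The product `∏ Xα` condenses onto the compact product `P = ∏ Yα`. To remove a set `C` of at
most `τ` points, send each `c ∈ C` to a partner `E c ∉ C` that agrees with `c` outside a block of
`τ` coordinates reserved for `c`: there are `2 ^ τ` candidates, so one of them avoids any set of
size at most `τ`. The blocks are disjoint, so each coordinate is moved at no more than one point,
and along every ultrafilter converging to `x` the map `E` converges to `x` or to `E x`. Hence the
kernel of the retraction `E` of `P` onto `P \ C` is closed, `P / ker E` is compact Hausdorff, and
the quotient map is bijective on `P \ C`. The same construction, applied after `E` to the
representatives of a further small set `C'` of `P / ker E`, yields a coarser closed relation on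
`P`; the induced map out of `P / ker E` is bijective off `C'`, so `P / ker E` is a strictly
`a_τ`-space. -/

open Filter Set Function

structure IsRetractionOnto {α : Type*} (E : α → α) (A : Set α) : Prop where
  mem : ∀ z, E z ∈ A
  eq_self : ∀ z ∈ A, E z = z

theorem IsRetractionOnto.apply_apply {α : Type*} {E : α → α} {A : Set α}
    (hE : IsRetractionOnto E A) (z : α) : E (E z) = E z :=
  hE.eq_self _ (hE.mem z)

theorem IsRetractionOnto.bijOn_mk_ker {α : Type*} {E : α → α} {A : Set α}
    (hE : IsRetractionOnto E A) : BijOn (Quotient.mk (Setoid.ker E)) A univ := by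
  refine ⟨mapsTo_univ _ _, fun z hz w hw hzw => ?_, fun k _ => ?_⟩
  · rw [← hE.eq_self z hz, ← hE.eq_self w hw]
    exact Quotient.exact hzw
  · obtain ⟨z, rfl⟩ := Quotient.exists_rep k
    exact ⟨E z, hE.mem z, Quotient.sound (hE.apply_apply z)⟩

theorem Set.bijOn_univ_iff_bijective_restrict {α β : Type*} {f : α → β} {s : Set α} :
    BijOn f s univ ↔ Bijective fun x : ↥s => f x :=
  ⟨fun h => ⟨injOn_iff_injective.mp h.injOn, surjOn_iff_surjective.mp h.surjOn⟩,
    fun h => ⟨mapsTo_univ _ _, injOn_iff_injective.mpr h.1, surjOn_iff_surjective.mpr h.2⟩⟩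

theorem Set.BijOn.bijOn_univ_of_comp {α β γ : Type*} {q : α → β} {g : β → γ} {s : Set α}
    {t : Set β} (hq : BijOn q s t) (h : BijOn (g ∘ q) s univ) : BijOn g t univ := by
  refine ⟨mapsTo_univ _ _, hq.image_eq ▸ h.injOn.image_of_comp, fun c _ => ?_⟩
  obtain ⟨z, hz, rfl⟩ := h.surjOn (mem_univ c)
  exact ⟨q z, hq.mapsTo hz, rfl⟩

section Collapse

variable {Z : Type*} [TopologicalSpace Z]

def IsLimitCollapsing (E : Z → Z) : Prop :=
  ∀ (V : Ultrafilter Z) (x : Z), ↑V ≤ 𝓝 x → Tendsto E V (𝓝 x) ∨ Tendsto E V (𝓝 (E x))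

theorem IsLimitCollapsing.isClosed_ker [T2Space Z] {E : Z → Z} (hE : IsLimitCollapsing E)
    (hidem : ∀ z, E (E z) = E z) : IsClosed {p : Z × Z | E p.1 = E p.2} := by
  refine isClosed_iff_ultrafilter.mpr fun p U hUp hU => ?_
  have hfst : Tendsto E (U.map Prod.fst) (𝓝 p.1) ∨ Tendsto E (U.map Prod.fst) (𝓝 (E p.1)) :=
    hE _ _ ((continuous_fst.tendsto p).mono_left hUp)
  have hsnd : Tendsto E (U.map Prod.snd) (𝓝 p.2) ∨ Tendsto E (U.map Prod.snd) (𝓝 (E p.2)) :=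
    hE _ _ ((continuous_snd.tendsto p).mono_left hUp)
  have hmap : map (E ∘ Prod.fst) (U : Filter (Z × Z)) = map (E ∘ Prod.snd) (U : Filter (Z × Z)) :=
    map_congr (eventually_of_mem hU fun _ h => h)
  simp only [Ultrafilter.coe_map, Tendsto, map_map, hmap] at hfst hsnd
  show E p.1 = E p.2
  rcases hfst with h₁ | h₁ <;> rcases hsnd with h₂ | h₂ <;>
    have h := tendsto_nhds_unique (f := E ∘ Prod.snd) h₁ h₂
  · exact congrArg E h
  · rw [h, hidem]
  · rw [← h, hidem]
  · exact h

theorem isClosed_preimage_singleton_of_isClosed_ker {E : Z → Z}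
    (hE : IsClosed {p : Z × Z | E p.1 = E p.2}) (d : Z) : IsClosed (E ⁻¹' {d}) := by
  by_cases hd : ∃ w, E w = d
  · obtain ⟨w, rfl⟩ := hd
    exact hE.preimage (continuous_id.prodMk continuous_const : Continuous fun z => (z, w))
  · rw [preimage_singleton_eq_empty.mpr (by simpa using hd)]
    exact isClosed_empty

theorem t2Space_quotient_of_isClosed [CompactSpace Z] [T2Space Z] (s : Setoid Z)
    (hs : IsClosed {p : Z × Z | s p.1 p.2}) : T2Space (Quotient s) := by
  have hfib : ∀ z, IsClosed {w | s w z} := fun z =>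
    hs.preimage (continuous_id.prodMk continuous_const : Continuous fun w => (w, z))
  -- the saturation of a closed set `F` is the projection of the compact set `s ∩ (univ ×ˢ F)`
  have hq : IsClosedMap (Quotient.mk s) := by
    intro F hF
    rw [← isQuotientMap_quotient_mk'.isClosed_preimage]
    change IsClosed (Quotient.mk s ⁻¹' (Quotient.mk s '' F))
    convert ((hs.inter (isClosed_univ.prod hF)).isCompact.image continuous_fst).isClosed
    ext z
    simp only [mem_preimage, mem_image, Quotient.eq, Prod.exists]
    exact ⟨fun ⟨w, hw, hwz⟩ => ⟨z, w, ⟨s.symm hwz, trivial, hw⟩, rfl⟩,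
      fun ⟨_, w, ⟨hzw, _, hw⟩, rfl⟩ => ⟨w, hw, s.symm hzw⟩⟩
  have hproper : IsProperMap (Quotient.mk s) := by
    refine isProperMap_iff_isClosedMap_and_compact_fibers.mpr
      ⟨continuous_quot_mk, hq, fun k => ?_⟩
    obtain ⟨z, rfl⟩ := Quotient.exists_rep k
    convert (hfib z).isCompact using 1
    ext w
    exact Quotient.eq
  have hquot : Topology.IsQuotientMap (Prod.map (Quotient.mk s) (Quotient.mk s)) :=
    (hproper.prodMap hproper).isClosedMap.isQuotientMap (hproper.prodMap hproper).continuous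
      (Quotient.mk_surjective.prodMap Quotient.mk_surjective)
  rw [t2_iff_isClosed_diagonal, ← hquot.isClosed_preimage]
  convert hs using 1
  ext p
  exact Quotient.eq

end Collapse

section Pi

variable {ι : Type u} {Y : ι → Type u}

theorem exists_notMem_eq_outside {a b : ∀ i, Y i} (hab : ∀ i, a i ≠ b i) (c : ∀ i, Y i)
    {U : Set ι} {B : Set (∀ i, Y i)} (hB : #B < 2 ^ #U) : ∃ d ∉ B, ∀ i ∉ U, d i = c i := by
  classical
  -- the `2 ^ #U` points that agree with `c` off `U` and with `a` or `b` on `U`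
  let φ : Set U → ∀ i, Y i := fun s i =>
    if h : i ∈ U then (if ⟨i, h⟩ ∈ s then a i else b i) else c i
  have hφ : Injective φ := by
    intro s t hst
    ext j
    have h := congrFun hst j
    simp only [φ, dif_pos j.2] at h
    by_cases hs : j ∈ s <;> by_cases ht : j ∈ t <;> simp_all [(hab j).symm]
  by_contra! hall
  have hrange : range φ ⊆ B := by
    rintro _ ⟨s, rfl⟩
    by_contra hs
    obtain ⟨i, hi, hne⟩ := hall _ hs
    exact hne (dif_neg hi)
  have := (mk_range_eq φ hφ).symm.trans_le (mk_le_mk_of_subset hrange)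
  rw [mk_set] at this
  exact hB.not_ge this

theorem exists_pi_map_moving_off (hι : ℵ₀ ≤ #ι) {a b : ∀ i, Y i} (hab : ∀ i, a i ≠ b i)
    {D B : Set (∀ i, Y i)} (hD : #D ≤ #ι) (hB : #B ≤ #ι) :
    ∃ G : (∀ i, Y i) → ∀ i, Y i, (∀ z ∉ D, G z = z) ∧ (∀ z ∈ D, G z ∉ B) ∧
      ∀ i, {z | G z i ≠ z i}.Subsingleton := by
  classical
  -- each point of `D` gets its own set of `#ι` coordinates, on which it may be moved
  obtain ⟨j⟩ : Nonempty (D × ι ↪ ι) := by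
    rw [← Cardinal.le_def, mk_prod, lift_id, lift_id]
    calc #D * #ι ≤ #ι * #ι := mul_le_mul_left hD _
      _ = #ι := mul_eq_self hι
  let U : D → Set ι := fun c => range fun p => j (c, p)
  have hU : ∀ c, #B < 2 ^ #(U c) := fun c => by
    rw [mk_range_eq _ fun p q h => congrArg Prod.snd (j.injective h)]
    exact hB.trans_lt (cantor _)
  choose d hdB hdc using fun c : D => exists_notMem_eq_outside hab c (hU c)
  let G : (∀ i, Y i) → ∀ i, Y i := fun z => if h : z ∈ D then d ⟨z, h⟩ else z
  have hmoved : ∀ i z, G z i ≠ z i → ∃ (h : z ∈ D) (p : ι), j (⟨z, h⟩, p) = i := by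
    intro i z hne
    by_cases hz : z ∈ D
    · refine ⟨hz, ?_⟩
      by_contra! hi
      exact hne (by simpa [G, hz] using hdc ⟨z, hz⟩ i fun ⟨p, hp⟩ => hi p hp)
    · exact absurd (by simp [G, hz]) hne
  refine ⟨G, fun z hz => dif_neg hz, fun z hz => by simpa [G, hz] using hdB ⟨z, hz⟩,
    fun i z hz w hw => ?_⟩
  obtain ⟨hzD, p, hp⟩ := hmoved i z hz
  obtain ⟨hwD, q, hq⟩ := hmoved i w hw
  exact congrArg (fun x : D × ι => (x.1 : ∀ i, Y i)) (j.injective (hp.trans hq.symm))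

variable [∀ i, TopologicalSpace (Y i)]

def MovesFinitelyManyFibres (E : (∀ i, Y i) → ∀ i, Y i) : Prop :=
  ∀ i, ∃ F : Set (∀ i, Y i), F.Finite ∧ {z | E z i ≠ z i} ⊆ E ⁻¹' F

theorem isLimitCollapsing_of_factor {φ E : (∀ i, Y i) → ∀ i, Y i}
    (hφ : ∀ d, IsClosed (φ ⁻¹' {d})) (hfac : ∀ z w, φ z = φ w → E z = E w)
    (hmove : ∀ i, ∃ F : Set (∀ i, Y i), F.Finite ∧ {z | E z i ≠ z i} ⊆ φ ⁻¹' F) :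
    IsLimitCollapsing E := by
  intro V x hVx
  by_cases hfib : ∃ d, φ ⁻¹' {d} ∈ V
  · obtain ⟨d, hd⟩ := hfib
    have hxd : φ x = d := by
      simpa [(hφ d).closure_eq] using mem_closure_iff_ultrafilter.mpr ⟨V, hd, hVx⟩
    refine Or.inr (tendsto_pure.mpr ?_ |>.mono_right (pure_le_nhds _))
    filter_upwards [hd] with z hz
    exact hfac z x (hz.trans hxd.symm)
  · push Not at hfib
    refine Or.inl (tendsto_pi_nhds.mpr fun i => ?_)
    obtain ⟨F, hF, hEF⟩ := hmove i
    -- an ultrafilter containing no fibre of `φ` contains no finite union of fibres either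
    have hfix : {z | E z i = z i} ∈ V := by
      refine mem_of_superset ((V.compl_mem_iff_notMem (s := φ ⁻¹' F)).mpr fun hFV => ?_)
        fun z hz => ?_
      · obtain ⟨d, -, hd⟩ := Ultrafilter.eq_pure_of_finite_mem hF (V.mem_map.mpr hFV)
        exact hfib d (V.mem_map.mp (hd ▸ rfl : {d} ∈ V.map φ))
      · by_contra h
        exact hz (hEF h)
    exact (((continuous_apply i).tendsto x).mono_left hVx).congr'
      (eventually_of_mem hfix fun z hz => hz.symm)

end Pi

section Refinement

variable {ι : Type u} {Y : ι → Type u} [∀ i, TopologicalSpace (Y i)] [∀ i, T2Space (Y i)]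

theorem exists_retraction_refining (hι : ℵ₀ ≤ #ι) {a b : ∀ i, Y i} (hab : ∀ i, a i ≠ b i)
    {φ : (∀ i, Y i) → ∀ i, Y i} {C D : Set (∀ i, Y i)} (hφ : IsRetractionOnto φ Cᶜ)
    (hφfib : ∀ d, IsClosed (φ ⁻¹' {d})) (hφmove : MovesFinitelyManyFibres φ)
    (hC : #C ≤ #ι) (hD : #D ≤ #ι) :
    ∃ E : (∀ i, Y i) → ∀ i, Y i, IsRetractionOnto E (C ∪ D)ᶜ ∧
      (∀ z w, φ z = φ w → E z = E w) ∧ MovesFinitelyManyFibres E ∧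
      IsClosed {p : (∀ i, Y i) × (∀ i, Y i) | E p.1 = E p.2} := by
  obtain ⟨G, hGfix, hGoff, hGmove⟩ :=
    exists_pi_map_moving_off hι hab hD ((mk_union_le C D).trans (add_le_of_le hι hC hD))
  have hE : IsRetractionOnto (G ∘ φ) (C ∪ D)ᶜ := by
    refine ⟨fun z => ?_, fun z hz => ?_⟩
    · by_cases hzD : φ z ∈ D
      · exact hGoff _ hzD
      · rw [comp_apply, hGfix _ hzD, compl_union]
        exact ⟨hφ.mem z, hzD⟩
    · rw [compl_union] at hz
      rw [comp_apply, hφ.eq_self z hz.1, hGfix z hz.2]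
  have hfac : ∀ z w, φ z = φ w → (G ∘ φ) z = (G ∘ φ) w := fun z w h => congrArg G h
  have hmove : ∀ i, ∃ F, F.Finite ∧ {z | (G ∘ φ) z i ≠ z i} ⊆ φ ⁻¹' F := by
    intro i
    obtain ⟨F, hF, hφF⟩ := hφmove i
    refine ⟨F ∪ {w | G w i ≠ w i}, hF.union (hGmove i).finite, fun z hz => ?_⟩
    by_cases h : φ z i = z i
    · exact Or.inr (show G (φ z) i ≠ φ z i from h ▸ hz)
    · exact Or.inl (hφF h)
  refine ⟨G ∘ φ, hE, hfac, fun i => ?_,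
    (isLimitCollapsing_of_factor hφfib hfac hmove).isClosed_ker hE.apply_apply⟩
  obtain ⟨F, hF, hsub⟩ := hmove i
  exact ⟨G '' F, hF.image G, hsub.trans fun z hz => mem_image_of_mem G hz⟩

variable [∀ i, CompactSpace (Y i)]

theorem strictATauSpace_quotient_ker (hι : ℵ₀ ≤ #ι) {a b : ∀ i, Y i} (hab : ∀ i, a i ≠ b i)
    {E : (∀ i, Y i) → ∀ i, Y i} {C : Set (∀ i, Y i)} (hE : IsRetractionOnto E Cᶜ)
    (hEmove : MovesFinitelyManyFibres E)
    (hEker : IsClosed {p : (∀ i, Y i) × (∀ i, Y i) | E p.1 = E p.2}) (hC : #C ≤ #ι) :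
    StrictATauSpace #ι (Quotient (Setoid.ker E)) := by
  have hq := hE.bijOn_mk_ker
  refine ⟨inferInstance, t2Space_quotient_of_isClosed _ hEker, fun C' hC' => ?_⟩
  set q := Quotient.mk (Setoid.ker E)
  have hD : #(Cᶜ ∩ q ⁻¹' C' : Set (∀ i, Y i)) ≤ #ι := by
    rw [← mk_image_eq_of_injOn _ _ (hq.injOn.mono inter_subset_left)]
    exact (mk_le_mk_of_subset (image_subset_iff.mpr inter_subset_right)).trans hC'
  obtain ⟨E₂, hE₂, hfac, -, hker₂⟩ := exists_retraction_refining hι hab hE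
    (isClosed_preimage_singleton_of_isClosed_ker hEker) hEmove hC hD
  refine ⟨Quotient (Setoid.ker E₂), _, inferInstance, t2Space_quotient_of_isClosed _ hker₂,
    Quotient.lift (Quotient.mk _) fun z w h => Quotient.sound (hfac z w h),
    continuous_quot_mk.quotient_lift _, ?_⟩
  rw [← bijOn_univ_iff_bijective_restrict]
  have hcompl : (C ∪ (Cᶜ ∩ q ⁻¹' C'))ᶜ = Cᶜ ∩ q ⁻¹' C'ᶜ := by
    ext z
    simp only [mem_compl_iff, mem_union, mem_inter_iff, mem_preimage]
    tauto
  have hq' := hq.inter_mapsTo (mapsTo_preimage q C'ᶜ) inter_subset_right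
  rw [univ_inter] at hq'
  exact hq'.bijOn_univ_of_comp (hcompl ▸ hE₂.bijOn_mk_ker)

theorem exists_strictATauSpace_condensation_pi (hι : ℵ₀ ≤ #ι) {a b : ∀ i, Y i}
    (hab : ∀ i, a i ≠ b i) {C : Set (∀ i, Y i)} (hC : #C ≤ #ι) :
    ∃ (K : Type u) (_ : TopologicalSpace K), StrictATauSpace #ι K ∧
      ∃ q : (∀ i, Y i) → K, Continuous q ∧ BijOn q Cᶜ univ := by
  have hid : IsRetractionOnto (id : (∀ i, Y i) → ∀ i, Y i) ∅ᶜ :=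
    ⟨fun _ => notMem_empty _, fun _ _ => rfl⟩
  obtain ⟨E, hE, -, hEmove, hEker⟩ := exists_retraction_refining (D := C) hι hab hid
    (fun _ => isClosed_singleton) (fun _ => ⟨∅, finite_empty, fun _ hz => hz rfl⟩) (by simp) hC
  rw [empty_union] at hE
  exact ⟨_, _, strictATauSpace_quotient_ker hι hab hE hEmove hEker hC, _, continuous_quot_mk,
    hE.bijOn_mk_ker⟩

end Refinement

theorem stmt_16_general (τ : Cardinal.{u}) (hτ : ℵ₀ ≤ τ)
    (ι : Type u) (hι : #ι = τ)
    (Xa : ι → Type u) [∀ i, TopologicalSpace (Xa i)]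
    (hnt : ∀ i, Nontrivial (Xa i)) (hsub : ∀ i, Subcompact (Xa i)) :
    StrictATauSubcompact τ (∀ i, Xa i) := by
  subst hι
  intro C hC
  choose Y _ _ _ f hf hbij using hsub
  have hpair : ∀ i, ∃ a b : Y i, a ≠ b := fun i =>
    let ⟨x, y, hxy⟩ := (hnt i).exists_pair_ne
    ⟨f i x, f i y, (hbij i).injective.ne hxy⟩
  choose a b hab using hpair
  have hh : Bijective (Pi.map f) := Bijective.piMap hbij
  obtain ⟨K, _, hK, q, hq, hqC⟩ :=
    exists_strictATauSpace_condensation_pi hτ hab (mk_image_le.trans hC) (C := Pi.map f '' C)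
  refine ⟨K, _, hK, q ∘ Pi.map f, hq.comp (Continuous.piMap hf),
    bijOn_univ_iff_bijective_restrict.mp ?_⟩
  exact hqC.comp ((hh.injective.injOn.bijOn_image (s := C)).compl hh)

/-- a product of `τ` many nontrivial subcompact Hausdorff spaces is
strictly `a_τ`-subcompact. -/
theorem stmt_16 (τ : Cardinal.{u}) (hτ : ℵ₀ ≤ τ)
    (ι : Type u) (hι : #ι = τ)
    (Xa : ι → Type u) [∀ i, TopologicalSpace (Xa i)] [∀ i, T2Space (Xa i)]
    (hnt : ∀ i, Nontrivial (Xa i)) (hsub : ∀ i, Subcompact (Xa i)) :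
    StrictATauSubcompact τ (∀ i, Xa i) :=
  stmt_16_general τ hτ ι hι Xa hnt hsub
end

section
/- Let X be a Hausdorff space that admits a condensation onto a metrizable compact space without isolated points, and let Y be a subcompact Hausdorff space. Then the product X × Y is strictly a_{ℵ₀}-subcompact. -/
open Cardinal Topology
open Set Function Metric

universe u

noncomputable def chooseSeq {α : Type u} (A : ℕ → Set α) (hA : ∀ n, (A n).Infinite) : ℕ → α
  | n =>
    (((hA n).diff (Set.finite_range fun m : Finset.range n => chooseSeq A hA m.1)).nonempty).some
decreasing_by all_goals exact Finset.mem_range.mp m.2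

theorem chooseSeq_spec {α : Type u} (A : ℕ → Set α) (hA : ∀ n, (A n).Infinite) (n : ℕ) :
    chooseSeq A hA n ∈ A n \ Set.range fun m : Finset.range n => chooseSeq A hA m.1 := by
  rw [chooseSeq.eq_def]
  exact Set.Nonempty.some_mem _

theorem chooseSeq_mem {α : Type u} (A : ℕ → Set α) (hA : ∀ n, (A n).Infinite) (n : ℕ) :
    chooseSeq A hA n ∈ A n := (chooseSeq_spec A hA n).1

theorem chooseSeq_injective {α : Type u} (A : ℕ → Set α) (hA : ∀ n, (A n).Infinite) :
    Function.Injective (chooseSeq A hA) := by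
  intro m n h
  by_contra hmn
  wlog hlt : m < n generalizing m n
  · exact this h.symm (Ne.symm hmn) (by omega)
  exact (chooseSeq_spec A hA n).2 ⟨⟨m, Finset.mem_range.mpr hlt⟩, h⟩



theorem ball_not_countable {K : Type u} [MetricSpace K] [CompactSpace K]
    (hK : ∀ k : K, (𝓝[≠] k).NeBot) (k : K) {r : ℝ} (hr : 0 < r) :
    ¬ (Metric.ball k r).Countable := by
  intro hcnt
  have hpre : Preperfect (Metric.ball k (r / 2)) := by
    intro x hx
    rw [accPt_iff_nhds]
    intro U hU
    have hmem : U ∩ Metric.ball k (r / 2) ∈ 𝓝 x :=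
      Filter.inter_mem hU (Metric.isOpen_ball.mem_nhds hx)
    have hmem' : (U ∩ Metric.ball k (r / 2)) ∩ {x}ᶜ ∈ 𝓝[≠] x :=
      Filter.inter_mem (mem_nhdsWithin_of_mem_nhds hmem) self_mem_nhdsWithin
    obtain ⟨y, hy⟩ := (hK x).nonempty_of_mem hmem'
    exact ⟨y, hy.1, hy.2⟩
  have hperf : Perfect (closure (Metric.ball k (r / 2))) := hpre.perfect_closure
  have hne : (closure (Metric.ball k (r / 2))).Nonempty :=
    ⟨k, subset_closure (mem_ball_self (by linarith))⟩
  obtain ⟨f, hrange, -, hinj⟩ := hperf.exists_nat_bool_injection hne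
  have hsub : closure (Metric.ball k (r / 2)) ⊆ Metric.ball k r :=
    closure_ball_subset_closedBall.trans (Metric.closedBall_subset_ball (by linarith))
  have hrc : (Set.range f).Countable := (hcnt.mono (hrange.trans hsub))
  haveI : Countable (Set.range f) := hrc.to_subtype
  haveI : Countable (ℕ → Bool) := Countable.of_equiv _ (Equiv.ofInjective f hinj).symm
  obtain ⟨g, hg⟩ := exists_surjective_nat (ℕ → Bool)
  refine Function.cantor_surjective (fun n => {m | g n m = true} : ℕ → Set ℕ) ?_
  intro S
  classical
  obtain ⟨n, hn⟩ := hg fun m => decide (m ∈ S)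
  refine ⟨n, ?_⟩
  ext m
  simp [hn]

theorem core_lemma {K L W : Type u} [MetricSpace K] [CompactSpace K]
    (hK : ∀ k : K, (𝓝[≠] k).NeBot)
    [TopologicalSpace L] [CompactSpace L] [T2Space L]
    [TopologicalSpace W] [CompactSpace W] [T2Space W]
    (q : K × L → W) (hqc : Continuous q) (hqs : Function.Surjective q)
    (B : Set (K × L)) (hB : B.Countable)
    (hq2 : ∀ p p' : K × L, q p = q p' → p = p' ∨ (p ∈ B ∧ p' ∈ B))
    (C : Set W) (hC : C.Countable) :
    ∃ (W' : Type u) (_ : TopologicalSpace W'), CompactSpace W' ∧ T2Space W' ∧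
      ∃ g : W → W', Continuous g ∧ Function.Bijective (fun x : ↥(Cᶜ) => g x) ∧
        Function.Surjective (g ∘ q) ∧
        ∃ B' : Set (K × L), B'.Countable ∧
          ∀ p p' : K × L, g (q p) = g (q p') → p = p' ∨ (p ∈ B' ∧ p' ∈ B') := by
  rcases C.eq_empty_or_nonempty with rfl | ⟨c₀, hc₀⟩
  · refine ⟨W, inferInstance, inferInstance, inferInstance, id, continuous_id, ?_, by simpa using hqs,
      B, hB, hq2⟩
    constructor
    · exact fun a b h => Subtype.ext h
    · exact fun w => ⟨⟨w, by simp⟩, rfl⟩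
  haveI : Nonempty K := ⟨((hqs c₀).choose).1⟩
  -- preimages of countable sets are countable
  have hpre : ∀ S : Set W, S.Countable → (q ⁻¹' S).Countable := by
    intro S hS
    have hsub : q ⁻¹' S ⊆ B ∪ {p : K × L | p ∉ B ∧ q p ∈ S} := by
      intro p hp
      by_cases hpB : p ∈ B
      · exact Or.inl hpB
      · exact Or.inr ⟨hpB, hp⟩
    refine Set.Countable.mono hsub (hB.union ?_)
    haveI := hS.to_subtype
    rw [← Set.countable_coe_iff]
    refine Function.Injective.countable
      (f := fun p : ↥{p : K × L | p ∉ B ∧ q p ∈ S} => (⟨q p.1, p.2.2⟩ : ↥S)) ?_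
    intro p p' h
    have hqq : q p.1 = q p'.1 := congrArg Subtype.val h
    rcases hq2 _ _ hqq with heq | ⟨h1, _⟩
    · exact Subtype.ext heq
    · exact absurd h1 p.2.1
  classical
  haveI hCc : Countable ↥C := hC.to_subtype
  obtain ⟨e, he⟩ : ∃ e : ↥C → ℕ, Function.Injective e :=
    (countable_iff_exists_injective ↥C).mp inferInstance
  choose p hp using fun c : ↥C => hqs ↑c
  set E : Set (K × L) := B ∪ q ⁻¹' C with hE
  have hEc : E.Countable := hB.union (hpre C hC)
  have hslice : ∀ l : L, {x : K | (x, l) ∈ E}.Countable := by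
    intro l
    exact hEc.preimage (f := fun x : K => (x, l)) (fun a b h => (Prod.mk.injEq a l b l ▸ h : _ ∧ _).1)
  haveI : Infinite K := by
    set k₁ : K := Classical.arbitrary K
    have h1 := ball_not_countable hK k₁ (r := 1) (by norm_num)
    have hinf : (Metric.ball k₁ 1).Infinite := fun hfin => h1 hfin.countable
    exact Set.infinite_univ_iff.mp (hinf.mono (Set.subset_univ _))
  set A : ℕ → Set K := fun n =>
    if hn : ∃ c : ↥C, e c = n then
      Metric.ball (p hn.choose).1 (1 / (n + 1)) \ {x : K | (x, (p hn.choose).2) ∈ E}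
    else Set.univ with hA_def
  have hA : ∀ n, (A n).Infinite := by
    intro n
    rw [hA_def]
    dsimp only
    split_ifs with hn
    · have hb := ball_not_countable hK (p hn.choose).1
        (r := 1 / (n + 1)) (by positivity)
      intro hfin
      refine hb (Set.Countable.mono (fun x hx => ?_) (hfin.countable.union (hslice (p hn.choose).2)))
      by_cases hxE : (x, (p hn.choose).2) ∈ E
      · exact Or.inr hxE
      · exact Or.inl ⟨hx, hxE⟩
    · exact Set.infinite_univ
  set F := chooseSeq A hA with hF
  set t : ↥C → K := fun c => F (e c) with ht
  have hAc : ∀ c : ↥C,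
      A (e c) = Metric.ball (p c).1 (1 / (e c + 1)) \ {x : K | (x, (p c).2) ∈ E} := by
    intro c
    have hn : ∃ c' : ↥C, e c' = e c := ⟨c, rfl⟩
    rw [hA_def]
    dsimp only
    rw [dif_pos hn, he hn.choose_spec]
  have ht_mem : ∀ c : ↥C, t c ∈ A (e c) := fun c => chooseSeq_mem A hA (e c)
  have ht_ball : ∀ c : ↥C, dist (t c) (p c).1 < 1 / (e c + 1) := by
    intro c
    have := ht_mem c
    rw [hAc c] at this
    exact Metric.mem_ball.mp this.1
  have ht_E : ∀ c : ↥C, ((t c, (p c).2) : K × L) ∉ E := by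
    intro c
    have := ht_mem c
    rw [hAc c] at this
    exact this.2
  have ht_inj : Function.Injective t := fun c c' h => he (chooseSeq_injective A hA h)
  set s : ↥C → W := fun c => q (t c, (p c).2) with hs
  have hs_notC : ∀ c : ↥C, s c ∉ C := fun c hc => ht_E c (Or.inr hc)
  have hs_notB : ∀ c : ↥C, ((t c, (p c).2) : K × L) ∉ B := fun c hb => ht_E c (Or.inl hb)
  have hs_inj : Function.Injective s := by
    intro c c' h
    rcases hq2 _ _ h with heq | ⟨h1, _⟩
    · exact ht_inj (congrArg Prod.fst heq)
    · exact absurd h1 (hs_notB c)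
  have hs_ne : ∀ c c' : ↥C, s c ≠ ↑c' := fun c c' h => hs_notC c (h ▸ c'.2)
  -- the equivalence relation
  set r : W → W → Prop := fun w w' =>
    w = w' ∨ ∃ c : ↥C, (w = ↑c ∧ w' = s c) ∨ (w = s c ∧ w' = ↑c) with hr
  have hr_eqv : Equivalence r := by
    constructor
    · exact fun w => Or.inl rfl
    · rintro w w' (rfl | ⟨c, ⟨rfl, rfl⟩ | ⟨rfl, rfl⟩⟩)
      · exact Or.inl rfl
      · exact Or.inr ⟨c, Or.inr ⟨rfl, rfl⟩⟩
      · exact Or.inr ⟨c, Or.inl ⟨rfl, rfl⟩⟩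
    · rintro w w' w'' (rfl | ⟨c, ⟨rfl, rfl⟩ | ⟨rfl, rfl⟩⟩) h2
      · exact h2
      · rcases h2 with rfl | ⟨c', ⟨h3, h4⟩ | ⟨h3, h4⟩⟩
        · exact Or.inr ⟨c, Or.inl ⟨rfl, rfl⟩⟩
        · exact absurd h3 (hs_ne c c')
        · exact Or.inl (by rw [h4, hs_inj h3])
      · rcases h2 with rfl | ⟨c', ⟨h3, h4⟩ | ⟨h3, h4⟩⟩
        · exact Or.inr ⟨c, Or.inr ⟨rfl, rfl⟩⟩
        · refine Or.inl ?_
          have : c = c' := Subtype.ext h3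
          rw [h4, ← this]
        · exact absurd h3.symm (hs_ne c' c)
  have h_eq_iff : ∀ w w', Quot.mk r w = Quot.mk r w' ↔ r w w' := by
    intro w w'
    rw [Quot.eq]
    exact hr_eqv.eqvGen_iff
  -- the pairs set in (K × L) × (K × L)
  set pair : ↥C → (K × L) × (K × L) := fun c => (p c, (t c, (p c).2)) with hpair
  set P0 : Set ((K × L) × (K × L)) := Set.range pair with hP0
  have hP0_closure : closure P0 ⊆ Set.diagonal (K × L) ∪ P0 := by
    rintro ⟨⟨a, b⟩, ⟨a', b'⟩⟩ hz
    have hbb : b = b' := by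
      have hcont : Continuous (fun u : (K × L) × (K × L) => (u.1.2, u.2.2)) :=
        (continuous_snd.comp continuous_fst).prodMk (continuous_snd.comp continuous_snd)
      have himg : (fun u : (K × L) × (K × L) => (u.1.2, u.2.2)) '' P0 ⊆ Set.diagonal L := by
        rintro _ ⟨_, ⟨c, rfl⟩, rfl⟩
        rfl
      have hmem : ((b : L), (b' : L)) ∈ closure (Set.diagonal L) :=
        closure_mono himg (image_closure_subset_closure_image hcont ⟨_, hz, rfl⟩)
      have := isClosed_diagonal.closure_subset hmem
      exact this
    subst hbb
    by_cases haa : a = a'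
    · exact Or.inl (by simp [Set.diagonal, haa])
    · right
      set ε := dist a a' with hε
      have hε0 : 0 < ε := dist_pos.mpr haa
      set V : Set ((K × L) × (K × L)) := {u | dist u.1.1 a < ε / 3 ∧ dist u.2.1 a' < ε / 3}
        with hV
      have hV_open : IsOpen V := by
        have c1 : Continuous fun u : (K × L) × (K × L) => dist u.1.1 a :=
          ((continuous_fst.comp continuous_fst).dist continuous_const)
        have c2 : Continuous fun u : (K × L) × (K × L) => dist u.2.1 a' :=
          ((continuous_fst.comp continuous_snd).dist continuous_const)
        exact (isOpen_lt c1 continuous_const).inter (isOpen_lt c2 continuous_const)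
      have hzV : (((a, b), (a', b)) : (K × L) × (K × L)) ∈ V := by
        constructor <;> simp only [hV, Set.mem_setOf_eq, dist_self] <;> positivity
      have hz' : (((a, b), (a', b)) : (K × L) × (K × L)) ∈ closure (P0 ∩ V) := by
        rw [_root_.mem_closure_iff] at hz ⊢
        intro O hO hzO
        obtain ⟨u, ⟨huO, huV⟩, huP⟩ := hz (O ∩ V) (hO.inter hV_open) ⟨hzO, hzV⟩
        exact ⟨u, huO, huP, huV⟩
      have hfin : (P0 ∩ V).Finite := by
        have hsub : P0 ∩ V ⊆ pair '' {c : ↥C | ((e c : ℝ)) < 3 / ε} := by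
          rintro u ⟨⟨c, rfl⟩, hv⟩
          refine ⟨c, ?_, rfl⟩
          have h1 : dist (p c).1 a < ε / 3 := hv.1
          have h2 : dist (t c) a' < ε / 3 := hv.2
          have h3 := ht_ball c
          have h4 : ε ≤ ε / 3 + 1 / ((e c : ℝ) + 1) + ε / 3 := by
            calc ε = dist a a' := hε
            _ ≤ dist a (p c).1 + dist (p c).1 (t c) + dist (t c) a' := dist_triangle4 a _ _ a'
            _ ≤ ε / 3 + 1 / ((e c : ℝ) + 1) + ε / 3 := by
                refine add_le_add (add_le_add ?_ ?_) h2.le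
                · rw [dist_comm]; exact h1.le
                · rw [dist_comm]; exact h3.le
          have h5 : ε / 3 ≤ 1 / ((e c : ℝ) + 1) := by linarith
          have h6 : (0 : ℝ) < (e c : ℝ) + 1 := by positivity
          have h7 : ((e c : ℝ) + 1) ≤ 3 / ε := by
            rw [le_div_iff₀ hε0]
            rw [div_le_div_iff₀ (by norm_num : (0:ℝ) < 3) h6] at h5
            nlinarith
          have h8 : (0 : ℝ) ≤ (e c : ℝ) := Nat.cast_nonneg _
          simp only [Set.mem_setOf_eq]
          linarith
        refine Set.Finite.subset (Set.Finite.image pair ?_) hsub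
        have hsub2 : {c : ↥C | ((e c : ℝ)) < 3 / ε} ⊆ e ⁻¹' {n : ℕ | (n : ℝ) < 3 / ε} :=
          fun c hc => hc
        refine Set.Finite.subset (Set.Finite.preimage he.injOn ?_) hsub2
        refine Set.Finite.subset (Set.finite_Iio (⌈3 / ε⌉₊)) ?_
        intro n hn
        exact Nat.lt_ceil.mpr hn
      have hmem2 := hfin.isClosed.closure_subset hz'
      exact hmem2.1
  have hswap_diag : Prod.swap '' (Set.diagonal (K × L)) = Set.diagonal (K × L) := by
    ext u
    constructor
    · rintro ⟨v, hv, rfl⟩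
      exact hv.symm
    · intro hu
      exact ⟨u.swap, hu.symm, by simp⟩
  have hP0s_closure : closure (Prod.swap '' P0) ⊆ Set.diagonal (K × L) ∪ Prod.swap '' P0 := by
    have hsw : closure (Prod.swap '' P0) = Prod.swap '' closure P0 :=
      ((Homeomorph.prodComm (K × L) (K × L)).image_closure P0).symm
    rw [hsw]
    rw [← hswap_diag, ← Set.image_union]
    exact Set.image_mono hP0_closure
  set Rset : Set ((K × L) × (K × L)) := Set.diagonal (K × L) ∪ (P0 ∪ Prod.swap '' P0)
    with hRset
  have hRclosed : IsClosed Rset := by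
    refine isClosed_of_closure_subset ?_
    rw [hRset]
    rw [closure_union, closure_union]
    rw [isClosed_diagonal.closure_eq]
    refine Set.union_subset (Set.subset_union_left) ?_
    refine Set.union_subset ?_ ?_
    · intro u hu
      rcases hP0_closure hu with h | h
      · exact Or.inl h
      · exact Or.inr (Or.inl h)
    · intro u hu
      rcases hP0s_closure hu with h | h
      · exact Or.inl h
      · exact Or.inr (Or.inr h)
  set RW : Set (W × W) := Prod.map q q '' Rset with hRW
  have hRWclosed : IsClosed RW := ((hqc.prodMap hqc).isClosedMap _ hRclosed)
  have hRW_iff : ∀ w w', ((w, w') ∈ RW) ↔ r w w' := by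
    intro w w'
    constructor
    · rintro ⟨⟨u, u'⟩, hu, huw⟩
      have hw1 : q u = w := congrArg Prod.fst huw
      have hw2 : q u' = w' := congrArg Prod.snd huw
      rcases hu with hdiag | ⟨c, hc⟩ | ⟨v, ⟨c, hc⟩, hv⟩
      · have huu : u = u' := hdiag
        exact Or.inl (by rw [← hw1, ← hw2, huu])
      · have h1 : u = p c := congrArg Prod.fst hc.symm
        have h2 : u' = (t c, (p c).2) := congrArg Prod.snd hc.symm
        refine Or.inr ⟨c, Or.inl ⟨?_, ?_⟩⟩
        · rw [← hw1, h1, hp c]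
        · rw [← hw2, h2]
      · have hv1 : v.2 = u := congrArg Prod.fst hv
        have hv2 : v.1 = u' := congrArg Prod.snd hv
        have h1 : v.1 = p c := congrArg Prod.fst hc.symm
        have h2 : v.2 = (t c, (p c).2) := congrArg Prod.snd hc.symm
        refine Or.inr ⟨c, Or.inr ⟨?_, ?_⟩⟩
        · rw [← hw1, ← hv1, h2]
        · rw [← hw2, ← hv2, h1, hp c]
    · rintro (rfl | ⟨c, ⟨rfl, rfl⟩ | ⟨rfl, rfl⟩⟩)
      · obtain ⟨u, rfl⟩ := hqs w
        exact ⟨(u, u), Or.inl rfl, rfl⟩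
      · refine ⟨pair c, Or.inr (Or.inl ⟨c, rfl⟩), ?_⟩
        simp only [hpair, Prod.map]
        rw [hp c]
      · refine ⟨(pair c).swap, Or.inr (Or.inr ⟨pair c, ⟨c, rfl⟩, rfl⟩), ?_⟩
        simp only [hpair, Prod.swap, Prod.map]
        rw [hp c]
  -- the quotient map is closed
  have hg_closed : ∀ Fs : Set W, IsClosed Fs → IsClosed (Quot.mk r '' Fs) := by
    intro Fs hFs
    rw [← isQuotientMap_quot_mk.isClosed_preimage]
    have hsat : (Quot.mk r) ⁻¹' (Quot.mk r '' Fs) = Prod.fst '' (RW ∩ (Set.univ ×ˢ Fs)) := by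
      ext w
      constructor
      · rintro ⟨w₁, hw₁F, hmk⟩
        refine ⟨(w, w₁), ⟨(hRW_iff w w₁).mpr ?_, ⟨Set.mem_univ _, hw₁F⟩⟩, rfl⟩
        exact hr_eqv.symm ((h_eq_iff w₁ w).mp hmk)
      · rintro ⟨⟨w', w₁⟩, ⟨hRWm, ⟨-, hF⟩⟩, rfl⟩
        exact ⟨w₁, hF, (h_eq_iff w₁ w').mpr (hr_eqv.symm ((hRW_iff w' w₁).mp hRWm))⟩
    rw [hsat]
    exact (continuous_fst.isClosedMap) _ (hRWclosed.inter (isClosed_univ.prod hFs))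
  haveI hT2 : T2Space (Quot r) := by
    constructor
    intro x y hxy
    obtain ⟨w₁, rfl⟩ := Quot.exists_rep x
    obtain ⟨w₂, rfl⟩ := Quot.exists_rep y
    set F₁ : Set W := {w | r w w₁} with hF₁
    set F₂ : Set W := {w | r w w₂} with hF₂
    have hF₁c : IsClosed F₁ := by
      have : F₁ = (fun w => ((w, w₁) : W × W)) ⁻¹' RW := by
        ext w
        simp [hF₁, hRW_iff]
      rw [this]
      exact hRWclosed.preimage (continuous_id.prodMk continuous_const)
    have hF₂c : IsClosed F₂ := by
      have : F₂ = (fun w => ((w, w₂) : W × W)) ⁻¹' RW := by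
        ext w
        simp [hF₂, hRW_iff]
      rw [this]
      exact hRWclosed.preimage (continuous_id.prodMk continuous_const)
    have hdisj : Disjoint F₁ F₂ := by
      rw [Set.disjoint_left]
      intro w h1 h2
      exact hxy ((h_eq_iff w₁ w₂).mpr (hr_eqv.trans (hr_eqv.symm h1) h2))
    obtain ⟨U, V, hU, hV, hF₁U, hF₂V, hUV⟩ := normal_separation hF₁c hF₂c hdisj
    refine ⟨(Quot.mk r '' Uᶜ)ᶜ, (Quot.mk r '' Vᶜ)ᶜ,
      (hg_closed _ hU.isClosed_compl).isOpen_compl,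
      (hg_closed _ hV.isClosed_compl).isOpen_compl, ?_, ?_, ?_⟩
    · rintro ⟨w, hw, hmk⟩
      exact hw (hF₁U (hr_eqv.symm ((h_eq_iff w₁ w).mp hmk.symm)))
    · rintro ⟨w, hw, hmk⟩
      exact hw (hF₂V (hr_eqv.symm ((h_eq_iff w₂ w).mp hmk.symm)))
    · rw [Set.disjoint_left]
      rintro z hz1 hz2
      obtain ⟨w, rfl⟩ := Quot.exists_rep z
      by_cases hwU : w ∈ U
      · by_cases hwV : w ∈ V
        · exact Set.disjoint_left.mp hUV hwU hwV
        · exact hz2 ⟨w, hwV, rfl⟩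
      · exact hz1 ⟨w, hwU, rfl⟩
  refine ⟨Quot r, inferInstance, inferInstance, hT2, Quot.mk r, continuous_quot_mk, ?_, ?_, ?_⟩
  · constructor
    · intro a b hab
      rcases (h_eq_iff ↑a ↑b).mp hab with heq | ⟨c, ⟨h1, _⟩ | ⟨_, h2⟩⟩
      · exact Subtype.ext heq
      · exact absurd (h1 ▸ c.2) a.2
      · exact absurd (h2 ▸ c.2) b.2
    · intro z
      obtain ⟨w, rfl⟩ := Quot.exists_rep z
      by_cases hw : w ∈ C
      · refine ⟨⟨s ⟨w, hw⟩, hs_notC _⟩, ?_⟩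
        exact (h_eq_iff _ _).mpr (Or.inr ⟨⟨w, hw⟩, Or.inr ⟨rfl, rfl⟩⟩)
      · exact ⟨⟨w, hw⟩, rfl⟩
  · intro z
    obtain ⟨w, rfl⟩ := Quot.exists_rep z
    obtain ⟨u, rfl⟩ := hqs w
    exact ⟨u, rfl⟩
  · refine ⟨B ∪ q ⁻¹' (C ∪ Set.range s), hB.union (hpre _ (hC.union (Set.countable_range s))), ?_⟩
    intro a a' h
    rcases (h_eq_iff _ _).mp h with heq | ⟨c, ⟨h1, h2⟩ | ⟨h1, h2⟩⟩
    · rcases hq2 _ _ heq with heq' | ⟨hb1, hb2⟩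
      · exact Or.inl heq'
      · exact Or.inr ⟨Or.inl hb1, Or.inl hb2⟩
    · exact Or.inr ⟨Or.inr (by simp [h1, c.2]), Or.inr (by simp [h2])⟩
    · exact Or.inr ⟨Or.inr (by simp [h1]), Or.inr (by simp [h2, c.2])⟩

/-- if `X` admits a condensation onto a metrizable compact space without
isolated points and `Y` is subcompact, then `X × Y` is strictly `a_ℵ₀`-subcompact. -/
theorem stmt_17 (X : Type u) [TopologicalSpace X] [T2Space X]
    (Y : Type u) [TopologicalSpace Y] [T2Space Y]
    (hX : ∃ (K : Type u) (_ : TopologicalSpace K), CompactSpace K ∧ T2Space K ∧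
      TopologicalSpace.MetrizableSpace K ∧
      (∀ k : K, Filter.NeBot (nhdsWithin k {k}ᶜ)) ∧
      ∃ f : X → K, Continuous f ∧ Function.Bijective f)
    (hY : Subcompact Y) :
    StrictATauSubcompact Cardinal.aleph0 (X × Y) := by
  obtain ⟨K, tK, cptK, t2K, metK, perfK, f, hfc, hfb⟩ := hX
  obtain ⟨L, tL, cptL, t2L, h, hhc, hhb⟩ := hY
  letI : MetricSpace K := TopologicalSpace.metrizableSpaceMetric K
  intro C hC
  have hCc : C.Countable := Set.countable_coe_iff.mp (Cardinal.mk_le_aleph0_iff.mp hC)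
  set fh : X × Y → K × L := fun p => (f p.1, h p.2) with hfh
  have hfhc : Continuous fh := (hfc.comp continuous_fst).prodMk (hhc.comp continuous_snd)
  have hfhb : Function.Bijective fh := by
    constructor
    · intro a b hab
      have h1 : f a.1 = f b.1 := congrArg Prod.fst hab
      have h2 : h a.2 = h b.2 := congrArg Prod.snd hab
      exact Prod.ext (hfb.1 h1) (hhb.1 h2)
    · intro u
      obtain ⟨x1, hx1⟩ := hfb.2 u.1
      obtain ⟨x2, hx2⟩ := hhb.2 u.2
      exact ⟨(x1, x2), Prod.ext hx1 hx2⟩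
  set D : Set (K × L) := fh '' C with hD
  have hDc : D.Countable := hCc.image fh
  obtain ⟨Z, tZ, cptZ, t2Z, gD, hgDc, hgDbij, hgDsurj, B', hB'c, hB'2⟩ :=
    core_lemma (K := K) (L := L) (W := K × L) perfK id continuous_id Function.surjective_id
      ∅ Set.countable_empty (fun p p' hpp => Or.inl hpp) D hDc
  letI := tZ
  haveI := cptZ
  haveI := t2Z
  have hfh_mem : ∀ {x : X × Y}, x ∉ C → fh x ∉ D := by
    intro x hx hmem
    obtain ⟨c, hcC, hceq⟩ := hmem
    exact hx (hfhb.1 hceq ▸ hcC)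
  refine ⟨Z, tZ, ⟨cptZ, t2Z, ?_⟩, fun p => gD (fh p), hgDc.comp hfhc, ?_, ?_⟩
  · intro C' hC'
    have hC'c : C'.Countable := Set.countable_coe_iff.mp (Cardinal.mk_le_aleph0_iff.mp hC')
    obtain ⟨W', tW', cptW', t2W', g', hg'c, hg'bij, -, -⟩ :=
      core_lemma (K := K) (L := L) (W := Z) perfK gD hgDc (by simpa using hgDsurj)
        B' hB'c (fun p p' hpp => hB'2 p p' hpp) C' hC'c
    exact ⟨W', tW', cptW', t2W', g', hg'c, hg'bij⟩
  · intro a b hab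
    have hab' : (fun x : ↥(Dᶜ) => gD ↑x) ⟨fh ↑a, hfh_mem a.2⟩ = (fun x : ↥(Dᶜ) => gD ↑x) ⟨fh ↑b, hfh_mem b.2⟩ := hab
    have := hgDbij.1 hab'
    have hfheq : fh ↑a = fh ↑b := congrArg Subtype.val this
    exact Subtype.ext (hfhb.1 hfheq)
  · intro z
    obtain ⟨⟨u, hu⟩, hz⟩ := hgDbij.2 z
    obtain ⟨x, hx⟩ := hfhb.2 u
    have hxC : x ∉ C := fun hmem => hu ⟨x, hmem, hx⟩
    refine ⟨⟨x, hxC⟩, ?_⟩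
    simpa [hx] using hz
end

section
/- The space ℕ × {0,1}^{ω₁} (the product of the natural numbers with the discrete topology and the Cantor cube of weight ω₁) admits a condensation onto the space ℚ × {0,1}^{ω₁} (where ℚ carries its usual topology); however, ℚ × {0,1}^{ω₁} is not subcompact, i.e., it admits no condensation onto a compact Hausdorff space. -/
open Cardinal Topology

universe u

lemma rat_singleton_not_isOpen (q : ℚ) : ¬ IsOpen ({q} : Set ℚ) := by
  intro h
  rw [Metric.isOpen_iff] at h
  obtain ⟨ε, hε, hball⟩ := h q rfl
  obtain ⟨δ, hδ0, hδε⟩ := exists_rat_btwn (show (0:ℝ) < ε from hε)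
  have h0 : (0:ℚ) < δ := by exact_mod_cast hδ0
  have hmem : q + δ ∈ Metric.ball q ε := by
    rw [Metric.mem_ball, Rat.dist_eq]
    simpa [abs_of_pos hδ0] using hδε
  have := hball hmem
  simp only [Set.mem_singleton_iff] at this
  have : δ = 0 := by linarith [add_eq_left.mp this]
  exact absurd this (ne_of_gt h0)

lemma not_subcompact_rat_prod (K : Type u) [TopologicalSpace K] [CompactSpace K]
    [Nonempty K] : ¬ Subcompact (ℚ × K) := by
  rintro ⟨Y, tY, hcY, ht2Y, g, hg, hinj, hsurj⟩
  have hNE : Nonempty Y := ⟨g (Classical.arbitrary _)⟩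
  set F : ℚ → Set Y := fun q => g '' ({q} ×ˢ (Set.univ : Set K)) with hF
  have hFc : ∀ q, IsClosed (F q) := fun q =>
    ((isCompact_singleton.prod isCompact_univ).image hg).isClosed
  have hFU : ⋃ q, F q = Set.univ := by
    apply Set.eq_univ_of_forall
    intro y
    obtain ⟨⟨q, k⟩, rfl⟩ := hsurj y
    exact Set.mem_iUnion.2 ⟨q, ⟨(q, k), by simp, rfl⟩⟩
  obtain ⟨q, y, hy⟩ := nonempty_interior_of_iUnion_of_closed hFc hFU
  have hopen : IsOpen (g ⁻¹' interior (F q)) := isOpen_interior.preimage hg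
  obtain ⟨z, hzy⟩ := hsurj y
  have hz : z ∈ g ⁻¹' interior (F q) := by rw [Set.mem_preimage, hzy]; exact hy
  have hsub : g ⁻¹' interior (F q) ⊆ {q} ×ˢ (Set.univ : Set K) := by
    intro w hw
    obtain ⟨v, hv, hvw⟩ := interior_subset hw
    rwa [← hinj hvw]
  have hz1 : z.1 = q := (hsub hz).1
  obtain ⟨V, W, hV, hW, hzV, hzW, hVW⟩ := isOpen_prod_iff.1 hopen z.1 z.2 hz
  have hVq : V ⊆ {q} := fun r hr => (hsub (hVW (Set.mk_mem_prod hr hzW))).1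
  have hVeq : V = {q} := subset_antisymm hVq (by rintro r rfl; rwa [← hz1])
  exact rat_singleton_not_isOpen q (hVeq ▸ hV)

universe v w in
lemma nat_condenses_rat_cube :
    ∃ f : ℕ × ((Cardinal.aleph.{v} 1).out → Bool) → ℚ × ((Cardinal.aleph.{w} 1).out → Bool),
      Continuous f ∧ Function.Bijective f := by
  obtain ⟨e⟩ : Nonempty (ℕ ≃ ℚ) := ⟨(Denumerable.eqv ℚ).symm⟩
  obtain ⟨i⟩ : Nonempty ((Cardinal.aleph.{v} 1).out ≃ (Cardinal.aleph.{w} 1).out) := by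
    rw [← Cardinal.lift_mk_eq', Cardinal.mk_out, Cardinal.mk_out,
      Cardinal.lift_aleph, Cardinal.lift_aleph]
    simp
  let h := Homeomorph.piCongrLeft (Y := fun _ => Bool) i
  refine ⟨fun p => (e p.1, h p.2), ?_, ?_⟩
  · exact (continuous_of_discreteTopology.comp continuous_fst).prodMk
      (h.continuous.comp continuous_snd)
  · exact (e.prodCongr h.toEquiv).bijective

/-- `ℕ × {0,1}^{ω₁}` condenses onto `ℚ × {0,1}^{ω₁}`, but the latter is
not subcompact. -/
theorem stmt_19 :
    (∃ f : ℕ × ((Cardinal.aleph 1).out → Bool) → ℚ × ((Cardinal.aleph 1).out → Bool),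
      Continuous f ∧ Function.Bijective f) ∧
    ¬ Subcompact (ℚ × ((Cardinal.aleph 1).out → Bool)) :=
  ⟨nat_condenses_rat_cube, not_subcompact_rat_prod _⟩
end
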